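/- Let d ≥ 1 be an integer and a, τ ≥ 0 real numbers, and define H(x) := (1+4π²|x|²)^{−a/2} (1+ln(1+4π²|x|²))^{−τ/2} for x ∈ ℝ^d. Let ψ be a nonnegative Schwartz function on ℝ^d with ψ(0) > 0. Then there exist constants 0 < c ≤ C such that c H(x) ≤ (H ∗ ψ)(x) ≤ C H(x) for every x ∈ ℝ^d. -/
import Mathlib

open Real MeasureTheory

noncomputable section

/-- The logarithmically modified Bessel-potential-type weight
`H(x) = (1+4π²|x|²)^{−a/2} (1+ln(1+4π²|x|²))^{−τ/2}` on `ℝ^d`. -/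
def Hfun (d : ℕ) (a τ : ℝ) (x : EuclideanSpace ℝ (Fin d)) : ℝ :=
  (1 + 4 * π ^ 2 * ‖x‖ ^ 2) ^ (-a / 2) *
    (1 + Real.log (1 + 4 * π ^ 2 * ‖x‖ ^ 2)) ^ (-τ / 2)

namespace Stmt7Aux

variable {d : ℕ} {a τ : ℝ}

lemma A_one_le (x : EuclideanSpace ℝ (Fin d)) : (1:ℝ) ≤ 1 + 4 * π ^ 2 * ‖x‖ ^ 2 := by
  have : (0:ℝ) ≤ 4 * π ^ 2 * ‖x‖ ^ 2 := by positivity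
  linarith

lemma L_one_le (x : EuclideanSpace ℝ (Fin d)) :
    (1:ℝ) ≤ 1 + Real.log (1 + 4 * π ^ 2 * ‖x‖ ^ 2) := by
  have := Real.log_nonneg (A_one_le x)
  linarith

lemma Hfun_pos (x : EuclideanSpace ℝ (Fin d)) : 0 < Hfun d a τ x :=
  mul_pos (rpow_pos_of_pos (lt_of_lt_of_le one_pos (A_one_le x)) _)
    (rpow_pos_of_pos (lt_of_lt_of_le one_pos (L_one_le x)) _)

lemma Hfun_le_one (ha : 0 ≤ a) (hτ : 0 ≤ τ) (x : EuclideanSpace ℝ (Fin d)) :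
    Hfun d a τ x ≤ 1 := by
  have h1 : (1 + 4 * π ^ 2 * ‖x‖ ^ 2) ^ (-a / 2) ≤ 1 :=
    rpow_le_one_of_one_le_of_nonpos (A_one_le x) (by linarith)
  have h2 : (1 + Real.log (1 + 4 * π ^ 2 * ‖x‖ ^ 2)) ^ (-τ / 2) ≤ 1 :=
    rpow_le_one_of_one_le_of_nonpos (L_one_le x) (by linarith)
  have h2' : (0:ℝ) ≤ (1 + Real.log (1 + 4 * π ^ 2 * ‖x‖ ^ 2)) ^ (-τ / 2) :=
    (rpow_pos_of_pos (lt_of_lt_of_le one_pos (L_one_le x)) _).le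
  calc Hfun d a τ x ≤ 1 * 1 := mul_le_mul h1 h2 h2' one_pos.le
  _ = 1 := one_mul 1

lemma Hfun_neg (x : EuclideanSpace ℝ (Fin d)) : Hfun d a τ (-x) = Hfun d a τ x := by
  simp [Hfun]

/-- Submultiplicativity. -/
lemma key (ha : 0 ≤ a) (hτ : 0 ≤ τ) (x y : EuclideanSpace ℝ (Fin d)) :
    ((2:ℝ) ^ (-a / 2) * (1 + Real.log 2) ^ (-τ / 2)) * (Hfun d a τ x * Hfun d a τ y)
      ≤ Hfun d a τ (x + y) := by
  set Ax : ℝ := 1 + 4 * π ^ 2 * ‖x‖ ^ 2 with hAx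
  set Ay : ℝ := 1 + 4 * π ^ 2 * ‖y‖ ^ 2 with hAy
  set Az : ℝ := 1 + 4 * π ^ 2 * ‖x + y‖ ^ 2 with hAz
  have hAx1 : (1:ℝ) ≤ Ax := A_one_le x
  have hAy1 : (1:ℝ) ≤ Ay := A_one_le y
  have hAz1 : (1:ℝ) ≤ Az := A_one_le (x + y)
  have hAxp : (0:ℝ) < Ax := lt_of_lt_of_le one_pos hAx1
  have hAyp : (0:ℝ) < Ay := lt_of_lt_of_le one_pos hAy1
  have hAzp : (0:ℝ) < Az := lt_of_lt_of_le one_pos hAz1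
  have hsum : ‖x + y‖ ^ 2 ≤ 2 * ‖x‖ ^ 2 + 2 * ‖y‖ ^ 2 := by
    have h1 : ‖x + y‖ ≤ ‖x‖ + ‖y‖ := norm_add_le x y
    have h2 : ‖x + y‖ ^ 2 ≤ (‖x‖ + ‖y‖) ^ 2 := by
      nlinarith [norm_nonneg (x + y), norm_nonneg x, norm_nonneg y]
    nlinarith [sq_nonneg (‖x‖ - ‖y‖)]
  have hA : Az ≤ 2 * (Ax * Ay) := by
    have hπ : (0:ℝ) < π ^ 2 := by positivity
    rw [hAx, hAy, hAz]
    nlinarith [mul_nonneg (mul_nonneg hπ.le (sq_nonneg ‖x‖)) (mul_nonneg hπ.le (sq_nonneg ‖y‖))]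
  have hlog : 1 + Real.log Az ≤ (1 + Real.log 2) * ((1 + Real.log Ax) * (1 + Real.log Ay)) := by
    have h1 : Real.log Az ≤ Real.log (2 * (Ax * Ay)) := Real.log_le_log hAzp hA
    have h2 : Real.log (2 * (Ax * Ay)) = Real.log 2 + (Real.log Ax + Real.log Ay) := by
      rw [Real.log_mul two_ne_zero (by positivity), Real.log_mul hAxp.ne' hAyp.ne']
    have lx := Real.log_nonneg hAx1
    have ly := Real.log_nonneg hAy1
    have l2 := Real.log_nonneg one_le_two
    nlinarith [mul_nonneg lx ly, mul_nonneg l2 lx, mul_nonneg l2 ly,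
      mul_nonneg (mul_nonneg l2 lx) ly]
  have hLz1 : (1:ℝ) ≤ 1 + Real.log Az := L_one_le (x + y)
  have hLzp : (0:ℝ) < 1 + Real.log Az := lt_of_lt_of_le one_pos hLz1
  have hP1 : (2 * (Ax * Ay)) ^ (-a / 2) ≤ Az ^ (-a / 2) :=
    Real.rpow_le_rpow_of_nonpos hAzp hA (by linarith)
  have hP2 : ((1 + Real.log 2) * ((1 + Real.log Ax) * (1 + Real.log Ay))) ^ (-τ / 2)
      ≤ (1 + Real.log Az) ^ (-τ / 2) :=
    Real.rpow_le_rpow_of_nonpos hLzp hlog (by linarith)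
  have e1 : (2 * (Ax * Ay)) ^ (-a / 2) = 2 ^ (-a / 2) * (Ax ^ (-a / 2) * Ay ^ (-a / 2)) := by
    rw [Real.mul_rpow (by norm_num) (by positivity), Real.mul_rpow hAxp.le hAyp.le]
  have e2 : ((1 + Real.log 2) * ((1 + Real.log Ax) * (1 + Real.log Ay))) ^ (-τ / 2)
      = (1 + Real.log 2) ^ (-τ / 2) *
        ((1 + Real.log Ax) ^ (-τ / 2) * (1 + Real.log Ay) ^ (-τ / 2)) := by
    have l2 : (0:ℝ) ≤ 1 + Real.log 2 := by have := Real.log_nonneg one_le_two; linarith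
    have lx : (0:ℝ) ≤ 1 + Real.log Ax := by have := Real.log_nonneg hAx1; linarith
    have ly : (0:ℝ) ≤ 1 + Real.log Ay := by have := Real.log_nonneg hAy1; linarith
    rw [Real.mul_rpow l2 (mul_nonneg lx ly), Real.mul_rpow lx ly]
  have hmul : (2 * (Ax * Ay)) ^ (-a / 2) *
      ((1 + Real.log 2) * ((1 + Real.log Ax) * (1 + Real.log Ay))) ^ (-τ / 2)
      ≤ Az ^ (-a / 2) * (1 + Real.log Az) ^ (-τ / 2) := by
    have l2 : (0:ℝ) ≤ 1 + Real.log 2 := by have := Real.log_nonneg one_le_two; linarith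
    have lx : (0:ℝ) ≤ 1 + Real.log Ax := by have := Real.log_nonneg hAx1; linarith
    have ly : (0:ℝ) ≤ 1 + Real.log Ay := by have := Real.log_nonneg hAy1; linarith
    exact mul_le_mul hP1 hP2
      (Real.rpow_nonneg (mul_nonneg l2 (mul_nonneg lx ly)) _)
      (Real.rpow_nonneg hAzp.le _)
  calc (2:ℝ) ^ (-a / 2) * (1 + Real.log 2) ^ (-τ / 2) * (Hfun d a τ x * Hfun d a τ y)
      = (2 * (Ax * Ay)) ^ (-a / 2) *
        ((1 + Real.log 2) * ((1 + Real.log Ax) * (1 + Real.log Ay))) ^ (-τ / 2) := by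
        rw [e1, e2]; simp only [Hfun, ← hAx, ← hAy]; ring
    _ ≤ Az ^ (-a / 2) * (1 + Real.log Az) ^ (-τ / 2) := hmul
    _ = Hfun d a τ (x + y) := rfl

lemma Hfun_continuous : Continuous (Hfun d a τ) := by
  have hA : Continuous fun x : EuclideanSpace ℝ (Fin d) => 1 + 4 * π ^ 2 * ‖x‖ ^ 2 := by
    fun_prop
  have hAne : ∀ x : EuclideanSpace ℝ (Fin d), 1 + 4 * π ^ 2 * ‖x‖ ^ 2 ≠ 0 :=
    fun x => (lt_of_lt_of_le one_pos (A_one_le x)).ne'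
  apply Continuous.mul
  · exact hA.rpow_const fun x => Or.inl (hAne x)
  · exact (continuous_const.add (hA.log hAne)).rpow_const
      fun x => Or.inl (lt_of_lt_of_le one_pos (L_one_le x)).ne'

lemma inv_bound (a τ : ℝ) (ha : 0 ≤ a) (hτ : 0 ≤ τ) (t : ℝ) (ht : 0 ≤ t) :
    ((1 + 4 * π ^ 2 * t ^ 2) ^ (-a / 2) *
      (1 + Real.log (1 + 4 * π ^ 2 * t ^ 2)) ^ (-τ / 2))⁻¹
      ≤ (4 * π) ^ ⌈a + τ⌉₊ * (1 + t ^ ⌈a + τ⌉₊) := by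
  set k := ⌈a + τ⌉₊ with hk
  set A : ℝ := 1 + 4 * π ^ 2 * t ^ 2 with hA
  have hA1 : (1:ℝ) ≤ A := by
    have : (0:ℝ) ≤ 4 * π ^ 2 * t ^ 2 := by positivity
    rw [hA]; linarith
  have hAp : (0:ℝ) < A := lt_of_lt_of_le one_pos hA1
  have hL1 : (1:ℝ) ≤ 1 + Real.log A := by have := Real.log_nonneg hA1; linarith
  have hLp : (0:ℝ) < 1 + Real.log A := lt_of_lt_of_le one_pos hL1
  have hinv : (A ^ (-a / 2) * (1 + Real.log A) ^ (-τ / 2))⁻¹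
      = A ^ (a / 2) * (1 + Real.log A) ^ (τ / 2) := by
    rw [neg_div, neg_div, Real.rpow_neg hAp.le, Real.rpow_neg hLp.le, mul_inv, inv_inv, inv_inv]
  rw [hinv]
  have step1 : A ^ (a / 2) * (1 + Real.log A) ^ (τ / 2) ≤ A ^ ((a + τ) / 2) := by
    have hLA : 1 + Real.log A ≤ A := by
      have := Real.log_le_sub_one_of_pos hAp
      linarith
    have : (1 + Real.log A) ^ (τ / 2) ≤ A ^ (τ / 2) :=
      Real.rpow_le_rpow hLp.le hLA (by linarith)
    calc A ^ (a / 2) * (1 + Real.log A) ^ (τ / 2) ≤ A ^ (a / 2) * A ^ (τ / 2) := by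
          apply mul_le_mul_of_nonneg_left this (Real.rpow_nonneg hAp.le _)
      _ = A ^ ((a + τ) / 2) := by
          rw [← Real.rpow_add hAp]; ring_nf
  have step2 : A ^ ((a + τ) / 2) ≤ A ^ ((k : ℝ) / 2) :=
    Real.rpow_le_rpow_of_exponent_le hA1 (by
      have := Nat.le_ceil (a + τ); linarith)
  set b : ℝ := 2 * π * (1 + t) with hb
  have hbpos : (0:ℝ) < b := by rw [hb]; positivity
  have hAb : A ≤ b ^ 2 := by
    have hπ : (3:ℝ) < π := Real.pi_gt_three
    rw [hA, hb]
    nlinarith [sq_nonneg t, sq_nonneg π]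
  have step3 : A ^ ((k : ℝ) / 2) ≤ b ^ k := by
    have h1 : A ^ ((k : ℝ) / 2) ≤ (b ^ 2) ^ ((k : ℝ) / 2) :=
      Real.rpow_le_rpow hAp.le hAb (by positivity)
    have h2 : (b ^ 2) ^ ((k : ℝ) / 2) = b ^ k := by
      have hkk : ((2:ℕ):ℝ) * ((k : ℝ) / 2) = (k : ℝ) := by push_cast; ring
      rw [← Real.rpow_natCast b 2, ← Real.rpow_mul hbpos.le, hkk, Real.rpow_natCast]
    rw [h2] at h1; exact h1
  have step4 : b ^ k ≤ (4 * π) ^ k * (1 + t ^ k) := by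
    have hbk : b ^ k = (2 * π) ^ k * (1 + t) ^ k := by rw [hb, mul_pow]
    have h1t : (1 + t) ^ k ≤ 2 ^ k * (1 + t ^ k) := by
      rcases le_total t 1 with hle | hge
      · have : (1 + t) ^ k ≤ 2 ^ k := pow_le_pow_left₀ (by linarith) (by linarith) k
        have htk : (0:ℝ) ≤ t ^ k := by positivity
        nlinarith [pow_pos (by norm_num : (0:ℝ) < 2) k]
      · have : (1 + t) ^ k ≤ (2 * t) ^ k := pow_le_pow_left₀ (by linarith) (by linarith) k
        rw [mul_pow] at this
        nlinarith [pow_pos (by norm_num : (0:ℝ) < 2) k, pow_nonneg ht k]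
    have hπp : (0:ℝ) < π := Real.pi_pos
    calc b ^ k = (2 * π) ^ k * (1 + t) ^ k := hbk
      _ ≤ (2 * π) ^ k * (2 ^ k * (1 + t ^ k)) := by
          apply mul_le_mul_of_nonneg_left h1t (by positivity)
      _ = (4 * π) ^ k * (1 + t ^ k) := by
          rw [← mul_assoc, ← mul_pow]; ring_nf
  linarith [step1, step2, step3, step4]

end Stmt7Aux

open Stmt7Aux in
/-- For a nonnegative Schwartz function `ψ` with `ψ(0) > 0`, the convolution `H ∗ ψ` is
comparable to `H`: `c H(x) ≤ (H∗ψ)(x) ≤ C H(x)` for all `x`. -/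
theorem stmt7 (d : ℕ) (hd : 1 ≤ d) (a τ : ℝ) (ha : 0 ≤ a) (hτ : 0 ≤ τ)
    (ψ : SchwartzMap (EuclideanSpace ℝ (Fin d)) ℝ) (hψ : ∀ x, 0 ≤ ψ x) (hψ0 : 0 < ψ 0) :
    ∃ c C : ℝ, 0 < c ∧ c ≤ C ∧ ∀ x : EuclideanSpace ℝ (Fin d),
      c * Hfun d a τ x ≤ (∫ y, Hfun d a τ (x - y) * ψ y) ∧
      (∫ y, Hfun d a τ (x - y) * ψ y) ≤ C * Hfun d a τ x := by
  classical
  set c₀ : ℝ := (2:ℝ) ^ (-a / 2) * (1 + Real.log 2) ^ (-τ / 2) with hc₀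
  have hl2 : (0:ℝ) < 1 + Real.log 2 := by have := Real.log_nonneg one_le_two; linarith
  have hc₀pos : 0 < c₀ :=
    mul_pos (Real.rpow_pos_of_pos two_pos _) (Real.rpow_pos_of_pos hl2 _)
  set k := ⌈a + τ⌉₊ with hk
  have Hcont : Continuous (Hfun d a τ) := Hfun_continuous
  -- integrable majorant
  have h2int : Integrable (fun y : EuclideanSpace ℝ (Fin d) => ‖y‖ ^ k * ψ y) :=
    (ψ.integrable_pow_mul volume k).congr
      (Filter.Eventually.of_forall fun y => by simp only [Real.norm_of_nonneg (hψ y)])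
  have hmaj : Integrable (fun y : EuclideanSpace ℝ (Fin d) =>
      (4 * π) ^ k * (1 + ‖y‖ ^ k) * ψ y) :=
    ((ψ.integrable.add h2int).const_mul ((4 * π) ^ k)).congr
      (Filter.Eventually.of_forall fun y => by simp only [Pi.add_apply]; ring)
  -- integrability of G ψ where G = H⁻¹
  have hGcont : Continuous (fun y : EuclideanSpace ℝ (Fin d) => (Hfun d a τ y)⁻¹ * ψ y) :=
    (Hcont.inv₀ fun y => (Hfun_pos y).ne').mul ψ.continuous
  have hGint : Integrable (fun y : EuclideanSpace ℝ (Fin d) => (Hfun d a τ y)⁻¹ * ψ y) := by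
    refine hmaj.mono' hGcont.aestronglyMeasurable (Filter.Eventually.of_forall fun y => ?_)
    rw [Real.norm_of_nonneg (mul_nonneg (inv_nonneg.mpr (Hfun_pos y).le) (hψ y))]
    exact mul_le_mul_of_nonneg_right (inv_bound a τ ha hτ ‖y‖ (norm_nonneg y)) (hψ y)
  -- integrability of H ψ
  have hHψ : Integrable (fun y : EuclideanSpace ℝ (Fin d) => Hfun d a τ y * ψ y) := by
    refine ψ.integrable.mono' ((Hcont.mul ψ.continuous).aestronglyMeasurable)
      (Filter.Eventually.of_forall fun y => ?_)
    rw [Real.norm_of_nonneg (mul_nonneg (Hfun_pos y).le (hψ y))]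
    calc Hfun d a τ y * ψ y ≤ 1 * ψ y :=
          mul_le_mul_of_nonneg_right (Hfun_le_one ha hτ y) (hψ y)
      _ = ψ y := one_mul _
  set I : ℝ := ∫ y, Hfun d a τ y * ψ y with hI
  set M : ℝ := ∫ y, (Hfun d a τ y)⁻¹ * ψ y with hM
  -- positivity of I
  have hIpos : 0 < I := by
    rw [hI, integral_pos_iff_support_of_nonneg
      (fun y => mul_nonneg (Hfun_pos y).le (hψ y)) hHψ]
    have hU : IsOpen {y : EuclideanSpace ℝ (Fin d) | 0 < Hfun d a τ y * ψ y} :=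
      isOpen_lt continuous_const (Hcont.mul ψ.continuous)
    have h0U : (0 : EuclideanSpace ℝ (Fin d)) ∈
        {y : EuclideanSpace ℝ (Fin d) | 0 < Hfun d a τ y * ψ y} :=
      mul_pos (Hfun_pos 0) hψ0
    have hsub : {y : EuclideanSpace ℝ (Fin d) | 0 < Hfun d a τ y * ψ y} ⊆
        Function.support fun y => Hfun d a τ y * ψ y := fun y hy => ne_of_gt hy
    exact lt_of_lt_of_le (hU.measure_pos volume ⟨0, h0U⟩) (measure_mono hsub)
  -- pointwise bounds
  have lower_pt : ∀ x y : EuclideanSpace ℝ (Fin d),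
      c₀ * (Hfun d a τ x * Hfun d a τ y) ≤ Hfun d a τ (x - y) := by
    intro x y
    have h := key ha hτ x (-y)
    rwa [Hfun_neg, ← sub_eq_add_neg] at h
  have upper_pt : ∀ x y : EuclideanSpace ℝ (Fin d),
      Hfun d a τ (x - y) ≤ c₀⁻¹ * Hfun d a τ x * (Hfun d a τ y)⁻¹ := by
    intro x y
    have h := key ha hτ (x - y) y
    have hxy : x - y + y = x := by abel
    rw [hxy] at h
    have hy := Hfun_pos (a := a) (τ := τ) y
    have heq : Hfun d a τ (x - y)
        = c₀⁻¹ * (c₀ * (Hfun d a τ (x - y) * Hfun d a τ y)) * (Hfun d a τ y)⁻¹ := by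
      field_simp
    rw [heq]
    exact mul_le_mul_of_nonneg_right
      (mul_le_mul_of_nonneg_left h (inv_nonneg.mpr hc₀pos.le)) (inv_nonneg.mpr hy.le)
  -- main estimates, uniform in x
  have main : ∀ x : EuclideanSpace ℝ (Fin d),
      c₀ * I * Hfun d a τ x ≤ (∫ y, Hfun d a τ (x - y) * ψ y) ∧
      (∫ y, Hfun d a τ (x - y) * ψ y) ≤ c₀⁻¹ * M * Hfun d a τ x := by
    intro x
    have hfx : Integrable (fun y => Hfun d a τ (x - y) * ψ y) := by
      refine (hGint.const_mul (c₀⁻¹ * Hfun d a τ x)).mono'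
        (((Hcont.comp (continuous_const.sub continuous_id)).mul
          ψ.continuous).aestronglyMeasurable)
        (Filter.Eventually.of_forall fun y => ?_)
      rw [Real.norm_of_nonneg (mul_nonneg (Hfun_pos _).le (hψ y))]
      calc Hfun d a τ (x - y) * ψ y
          ≤ c₀⁻¹ * Hfun d a τ x * (Hfun d a τ y)⁻¹ * ψ y :=
            mul_le_mul_of_nonneg_right (upper_pt x y) (hψ y)
        _ = c₀⁻¹ * Hfun d a τ x * ((Hfun d a τ y)⁻¹ * ψ y) := by ring
    constructor
    · have hpt : ∀ y, c₀ * Hfun d a τ x * (Hfun d a τ y * ψ y)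
          ≤ Hfun d a τ (x - y) * ψ y := by
        intro y
        calc c₀ * Hfun d a τ x * (Hfun d a τ y * ψ y)
            = c₀ * (Hfun d a τ x * Hfun d a τ y) * ψ y := by ring
          _ ≤ Hfun d a τ (x - y) * ψ y :=
              mul_le_mul_of_nonneg_right (lower_pt x y) (hψ y)
      have h := integral_mono (hHψ.const_mul (c₀ * Hfun d a τ x)) hfx hpt
      rw [integral_const_mul] at h
      calc c₀ * I * Hfun d a τ x = c₀ * Hfun d a τ x * I := by ring
        _ ≤ ∫ y, Hfun d a τ (x - y) * ψ y := h
    · have hpt : ∀ y, Hfun d a τ (x - y) * ψ y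
          ≤ c₀⁻¹ * Hfun d a τ x * ((Hfun d a τ y)⁻¹ * ψ y) := by
        intro y
        calc Hfun d a τ (x - y) * ψ y
            ≤ c₀⁻¹ * Hfun d a τ x * (Hfun d a τ y)⁻¹ * ψ y :=
              mul_le_mul_of_nonneg_right (upper_pt x y) (hψ y)
          _ = c₀⁻¹ * Hfun d a τ x * ((Hfun d a τ y)⁻¹ * ψ y) := by ring
      have h := integral_mono hfx (hGint.const_mul (c₀⁻¹ * Hfun d a τ x)) hpt
      rw [integral_const_mul] at h
      calc (∫ y, Hfun d a τ (x - y) * ψ y) ≤ c₀⁻¹ * Hfun d a τ x * M := h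
        _ = c₀⁻¹ * M * Hfun d a τ x := by ring
  refine ⟨c₀ * I, c₀⁻¹ * M, mul_pos hc₀pos hIpos, ?_, main⟩
  obtain ⟨h1, h2⟩ := main 0
  exact le_of_mul_le_mul_right (h1.trans h2) (Hfun_pos (0 : EuclideanSpace ℝ (Fin d)))
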